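/- Let Δ ⊆ ℝ⁴ be the nonnegative orthant cone and let V, W ∈ Gr(2,4) be the row spans of the matrices V = [[1,0,1,1],[0,1,2,1]] and W = [[1,0,1,−1],[0,1,−2,1]]. Then: (a) V contains a nonzero vector with all coordinates ≥ 0 (V stabs Δ) while W contains no such vector; (b) the Plücker coordinates p_{12}, p_{14}, p_{23}, p_{34} (2×2 minors on the indicated column pairs) of V and W have the same signs (+,+,−,−); (c) the Plücker coordinates p_{13}, p_{24} of V and W have different signs. -/

import Mathlib

noncomputable def rowSpan {k n : ℕ} (A : Matrix (Fin k) (Fin n) ℝ) : Submodule ℝ (Fin n → ℝ) :=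
  Submodule.span ℝ (Set.range fun i => A i)

/-- The `2 × 2` minor of a `2 × 4` matrix on columns `i` and `j`. -/
noncomputable def pl (M : Matrix (Fin 2) (Fin 4) ℝ) (i j : Fin 4) : ℝ :=
  M 0 i * M 1 j - M 0 j * M 1 i

noncomputable def Vmat : Matrix (Fin 2) (Fin 4) ℝ := !![1, 0, 1, 1; 0, 1, 2, 1]
noncomputable def Wmat : Matrix (Fin 2) (Fin 4) ℝ := !![1, 0, 1, -1; 0, 1, -2, 1]

/-!
`V` stabs the orthant through its first row `(1,0,1,1)`. A vector `a • w₀ + b • w₁` of `W` is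
`(a, b, a - 2b, b - a)`; the sum of its third coordinate and twice its fourth is `-a`, so
nonnegative coordinates force `a = 0`, and then `(0, b, -2b, b)` forces `b = 0`.
-/

def StabsOrthant {n : ℕ} (S : Submodule ℝ (Fin n → ℝ)) : Prop :=
  ∃ x, x ∈ S ∧ x ≠ 0 ∧ ∀ i, 0 ≤ x i

lemma row_mem_rowSpan {k n : ℕ} (A : Matrix (Fin k) (Fin n) ℝ) (i : Fin k) :
    A i ∈ rowSpan A :=
  Submodule.subset_span ⟨i, rfl⟩

lemma mem_rowSpan_iff_exists_vecMul {k n : ℕ} (A : Matrix (Fin k) (Fin n) ℝ)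
    (x : Fin n → ℝ) : x ∈ rowSpan A ↔ ∃ c : Fin k → ℝ, Matrix.vecMul c A = x := by
  simp only [rowSpan, Submodule.mem_span_range_iff_exists_fun, ← Matrix.vecMul_eq_sum]

lemma stabsOrthant_rowSpan_Vmat : StabsOrthant (rowSpan Vmat) := by
  refine ⟨Vmat 0, row_mem_rowSpan Vmat 0, fun h => ?_, fun i => ?_⟩
  · simpa [Vmat] using congrFun h 0
  · fin_cases i <;> norm_num [Vmat]

lemma vecMul_Wmat (c : Fin 2 → ℝ) :
    Matrix.vecMul c Wmat = ![c 0, c 1, c 0 - 2 * c 1, c 1 - c 0] := by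
  ext i
  fin_cases i <;> simp [Matrix.vecMul, dotProduct, Fin.sum_univ_two, Wmat] <;> ring

lemma eq_zero_of_vecMul_Wmat_nonneg (c : Fin 2 → ℝ) (hc : ∀ i, 0 ≤ Matrix.vecMul c Wmat i) :
    c = 0 := by
  simp only [vecMul_Wmat] at hc
  have h0 := hc 0
  have h1 := hc 1
  have h2 := hc 2
  have h3 := hc 3
  simp at h0 h1 h2 h3
  have hc0 : c 0 = 0 := by linarith
  have hc1 : c 1 = 0 := by linarith
  ext i
  fin_cases i <;> simp [hc0, hc1]

lemma not_stabsOrthant_rowSpan_Wmat : ¬ StabsOrthant (rowSpan Wmat) := by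
  rintro ⟨x, hx, hne, hnonneg⟩
  obtain ⟨c, rfl⟩ := (mem_rowSpan_iff_exists_vecMul Wmat x).1 hx
  rw [eq_zero_of_vecMul_Wmat_nonneg c hnonneg, Matrix.zero_vecMul] at hne
  exact hne rfl

lemma pl_Vmat : pl Vmat 0 1 = 1 ∧ pl Vmat 0 2 = 2 ∧ pl Vmat 0 3 = 1 ∧
    pl Vmat 1 2 = -1 ∧ pl Vmat 1 3 = -1 ∧ pl Vmat 2 3 = -1 := by
  norm_num [pl, Vmat, Matrix.cons_val_two, Matrix.cons_val_three, Matrix.vecHead, Matrix.vecTail]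

lemma pl_Wmat : pl Wmat 0 1 = 1 ∧ pl Wmat 0 2 = -2 ∧ pl Wmat 0 3 = 1 ∧
    pl Wmat 1 2 = -1 ∧ pl Wmat 1 3 = 1 ∧ pl Wmat 2 3 = -1 := by
  norm_num [pl, Wmat, Matrix.cons_val_two, Matrix.cons_val_three, Matrix.vecHead, Matrix.vecTail]

/-- For `V` and `W` the row spans of `[[1,0,1,1],[0,1,2,1]]` and
`[[1,0,1,−1],[0,1,−2,1]]`: (a) `V` contains a nonzero vector with all coordinates `≥ 0`
(it stabs the orthant `Δ`) while `W` contains none; (b) the Plücker coordinates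
`p₁₂, p₁₄, p₂₃, p₃₄` of `V` and `W` have the same signs `(+,+,−,−)`;
(c) the Plücker coordinates `p₁₃` and `p₂₄` of `V` and `W` have different signs. -/
theorem stmt17 :
    ((∃ x, x ∈ rowSpan Vmat ∧ x ≠ 0 ∧ ∀ i, 0 ≤ x i) ∧
      ¬ (∃ x, x ∈ rowSpan Wmat ∧ x ≠ 0 ∧ ∀ i, 0 ≤ x i)) ∧
    ((0 < pl Vmat 0 1 ∧ 0 < pl Vmat 0 3 ∧ pl Vmat 1 2 < 0 ∧ pl Vmat 2 3 < 0) ∧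
      (0 < pl Wmat 0 1 ∧ 0 < pl Wmat 0 3 ∧ pl Wmat 1 2 < 0 ∧ pl Wmat 2 3 < 0)) ∧
    (pl Vmat 0 2 * pl Wmat 0 2 < 0 ∧ pl Vmat 1 3 * pl Wmat 1 3 < 0) := by
  obtain ⟨v01, v02, v03, v12, v13, v23⟩ := pl_Vmat
  obtain ⟨w01, w02, w03, w12, w13, w23⟩ := pl_Wmat
  refine ⟨⟨stabsOrthant_rowSpan_Vmat, not_stabsOrthant_rowSpan_Wmat⟩, ?_⟩
  rw [v01, v02, v03, v12, v13, v23, w01, w02, w03, w12, w13, w23]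
  norm_num
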